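/- arXiv:2603.06023 — 2 statements merged into one kernel-verified Lean document; each statement's English description precedes it below -/
import Mathlib

section
/- Let G: ℝ^D → ℝ^{D'×D'} be a continuous function with ‖G(z)‖_F ≤ A·exp(B‖z‖₂^r) for some 0 ≤ r < 2, let Q_n → Q be PSD D×D matrices, and let Z, Z₁, Z₂,… be i.i.d. standard Gaussian vectors in ℝ^D. Then (1/n)∑_{c=1}^n G(√(Q_n) Z_c) converges in probability to E[G(√Q Z)]. -/
open MeasureTheory ProbabilityTheory Filter

/-- The standard Gaussian measure on `ℝ^D`. -/
noncomputable def stdGaussian (D : ℕ) : Measure (Fin D → ℝ) :=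
  Measure.pi fun _ => gaussianReal 0 1

/-- The Euclidean norm on `ℝ^D`. -/
noncomputable def euclNorm {D : ℕ} (z : Fin D → ℝ) : ℝ :=
  Real.sqrt (∑ i, (z i) ^ 2)

/-- Frobenius norm of a real square matrix: `√(tr(Qᵀ Q))`. -/
noncomputable def frobNorm {D : ℕ} (Q : Matrix (Fin D) (Fin D) ℝ) : ℝ :=
  Real.sqrt (Matrix.trace (Q.transpose * Q))

/-- The positive semidefinite square root of a positive semidefinite matrix
(removed from Mathlib; restated with its former definition). -/
noncomputable def Matrix.PosSemidef.sqrt {n 𝕜 : Type*} [Fintype n] [DecidableEq n] [RCLike 𝕜] [PartialOrder 𝕜]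
    {A : Matrix n n 𝕜} (hA : A.PosSemidef) : Matrix n n 𝕜 :=
  hA.1.eigenvectorUnitary.1 * Matrix.diagonal ((↑) ∘ (Real.sqrt ∘ hA.1.eigenvalues)) *
  (star hA.1.eigenvectorUnitary : Matrix n n 𝕜)

/-! Write `g_n z = G (√Q_n z)` and `g z = G (√Q z)`, and split the empirical mean as
`(1/n) ∑ (g_n - g)(Z_c) + (1/n) ∑ g(Z_c)`. The second term tends to `E g(Z)` almost surely by
the strong law of large numbers. The first has `L¹` norm at most `E ‖g_n(Z) - g(Z)‖`, which
tends to `0` by dominated convergence: the square root is continuous on positive semidefinite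
matrices, so `√Q_n → √Q` and `‖√Q_n‖ ≤ K` for all `n`, whence
`‖g_n z‖ ≤ A exp (B K^r ‖z‖^r)`, and this is Gaussian-integrable because `r < 2`. -/

open Topology
open scoped ENNReal Matrix MatrixOrder

-- The Frobenius norm on matrices; it induces the usual product topology.
attribute [local instance] Matrix.frobeniusNormedAddCommGroup Matrix.frobeniusNormedSpace

lemma frobNorm_eq_sqrt_sum_sq {D : ℕ} (X : Matrix (Fin D) (Fin D) ℝ) :
    frobNorm X = √(∑ i, ∑ j, X i j ^ 2) := by
  rw [frobNorm, Matrix.trace, Finset.sum_comm]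
  simp [Matrix.mul_apply, sq]

lemma frobNorm_eq_norm {D : ℕ} (X : Matrix (Fin D) (Fin D) ℝ) : frobNorm X = ‖X‖ := by
  simp [frobNorm_eq_sqrt_sum_sq, Matrix.frobenius_norm_def, Real.sqrt_eq_rpow]

lemma Matrix.PosSemidef.sqrt_eq_cfcSqrt {n : Type*} [Fintype n] [DecidableEq n]
    {A : Matrix n n ℝ} (hA : A.PosSemidef) : hA.sqrt = CFC.sqrt A := by
  rw [CFC.sqrt_eq_cfc, cfc_nnreal_eq_real _ A hA.nonneg, hA.1.cfc_eq, Matrix.IsHermitian.cfc,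
    Unitary.conjStarAlgAut_apply]
  simp only [Matrix.PosSemidef.sqrt, Real.coe_sqrt, Real.coe_toNNReal']
  congr 3 with i
  simp [hA.eigenvalues_nonneg i]

lemma Matrix.tendsto_posSemidef_sqrt {n ι : Type*} [Fintype n] [DecidableEq n]
    {l : Filter ι} {Q : ι → Matrix n n ℝ} {Q₀ : Matrix n n ℝ} (hQ : ∀ i, (Q i).PosSemidef)
    (hQ₀ : Q₀.PosSemidef) (h : Tendsto Q l (𝓝 Q₀)) :
    Tendsto (fun i => (hQ i).sqrt) l (𝓝 hQ₀.sqrt) := by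
  -- The L2 operator norm induces the usual topology and turns matrices into a C⋆-algebra.
  have hcont : ContinuousOn CFC.sqrt {A : Matrix n n ℝ | 0 ≤ A} := by
    open scoped Matrix.Norms.L2Operator in exact CFC.continuousOn_sqrt
  simp only [Matrix.PosSemidef.sqrt_eq_cfcSqrt]
  exact (hcont _ hQ₀.nonneg).tendsto.comp
    (tendsto_nhdsWithin_iff.2 ⟨h, Eventually.of_forall fun i => (hQ i).nonneg⟩)

lemma euclNorm_nonneg {D : ℕ} (z : Fin D → ℝ) : 0 ≤ euclNorm z := Real.sqrt_nonneg _

lemma euclNorm_sq {D : ℕ} (z : Fin D → ℝ) : euclNorm z ^ 2 = ∑ i, z i ^ 2 :=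
  Real.sq_sqrt (by positivity)

lemma continuous_euclNorm {D : ℕ} : Continuous (euclNorm (D := D)) := by
  unfold euclNorm
  fun_prop

lemma euclNorm_mulVec_le {D : ℕ} (S : Matrix (Fin D) (Fin D) ℝ) (z : Fin D → ℝ) :
    euclNorm (S *ᵥ z) ≤ ‖S‖ * euclNorm z := by
  rw [← frobNorm_eq_norm, frobNorm_eq_sqrt_sum_sq, euclNorm, euclNorm,
    ← Real.sqrt_mul (by positivity), Finset.sum_mul]
  gcongr with i
  exact Finset.sum_mul_sq_le_sq_mul_sq Finset.univ (S i) z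

lemma norm_comp_mulVec_le_of_growth {D : ℕ} {E : Type*} [SeminormedAddCommGroup E]
    {G : (Fin D → ℝ) → E} {A B r K : ℝ} (hA : 0 ≤ A) (hB : 0 ≤ B) (hr : 0 ≤ r)
    (hG : ∀ z, ‖G z‖ ≤ A * Real.exp (B * euclNorm z ^ r))
    {S : Matrix (Fin D) (Fin D) ℝ} (hS : ‖S‖ ≤ K) (z : Fin D → ℝ) :
    ‖G (S *ᵥ z)‖ ≤ A * Real.exp (B * K ^ r * euclNorm z ^ r) := by
  refine (hG _).trans ?_
  rw [mul_assoc B]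
  gcongr
  calc euclNorm (S *ᵥ z) ^ r ≤ (K * euclNorm z) ^ r := by
        gcongr
        · exact euclNorm_nonneg _
        · exact (euclNorm_mulVec_le S z).trans (by gcongr; exact euclNorm_nonneg z)
    _ = K ^ r * euclNorm z ^ r :=
        Real.mul_rpow ((norm_nonneg S).trans hS) (euclNorm_nonneg z)

lemma Real.exists_mul_rpow_le_add_mul_sq {b r ε : ℝ} (hb : 0 ≤ b) (hr0 : 0 ≤ r) (hr2 : r < 2)
    (hε : 0 < ε) : ∃ C, ∀ t, 0 ≤ t → b * t ^ r ≤ C + ε * t ^ 2 := by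
  obtain ⟨T, hT⟩ := eventually_atTop.1
    ((tendsto_rpow_atTop (by linarith : 0 < 2 - r)).eventually_ge_atTop (b / ε))
  refine ⟨b * max T 0 ^ r, fun t ht => ?_⟩
  rcases le_total t (max T 0) with htT | hTt
  · have : b * t ^ r ≤ b * max T 0 ^ r := by gcongr
    nlinarith [sq_nonneg t]
  · have hsplit : t ^ (2 : ℝ) = t ^ (2 - r) * t ^ r := by
      rw [← Real.rpow_add' ht (by norm_num)]; norm_num
    have hb' : b ≤ ε * t ^ (2 - r) := (div_le_iff₀' hε).1 (hT t (le_of_max_le_left hTt))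
    have : b * t ^ r ≤ ε * t ^ 2 := by
      rw [← Real.rpow_two, hsplit, ← mul_assoc]
      gcongr
    have : 0 ≤ b * max T 0 ^ r := by positivity
    linarith

lemma integrable_exp_sq_div_four_gaussianReal :
    Integrable (fun x : ℝ => Real.exp (x ^ 2 / 4)) (gaussianReal 0 1) := by
  rw [gaussianReal_of_var_ne_zero 0 one_ne_zero,
    integrable_withDensity_iff (measurable_gaussianPDF 0 1)
      (ae_of_all _ fun x => ENNReal.ofReal_lt_top)]
  have hdensity : ∀ x : ℝ, Real.exp (x ^ 2 / 4) * (gaussianPDF 0 1 x).toReal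
      = (√(2 * Real.pi))⁻¹ * Real.exp (-4⁻¹ * x ^ 2) := by
    intro x
    rw [gaussianPDF, ENNReal.toReal_ofReal (gaussianPDFReal_nonneg 0 1 x), gaussianPDFReal,
      mul_left_comm, ← Real.exp_add]
    push_cast
    ring_nf
  simp only [hdensity]
  exact (integrable_exp_neg_mul_sq (by norm_num)).const_mul _

lemma integrable_exp_mul_euclNorm_rpow {D : ℕ} {b r : ℝ} (hb : 0 ≤ b) (hr0 : 0 ≤ r)
    (hr2 : r < 2) :
    Integrable (fun z : Fin D → ℝ => Real.exp (b * euclNorm z ^ r)) (stdGaussian D) := by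
  obtain ⟨C, hC⟩ :=
    Real.exists_mul_rpow_le_add_mul_sq hb hr0 hr2 (by norm_num : (0 : ℝ) < 1 / 4)
  have hdom : Integrable (fun z : Fin D → ℝ => Real.exp C * ∏ i, Real.exp (z i ^ 2 / 4))
      (stdGaussian D) :=
    (Integrable.fintype_prod (f := fun _ x => Real.exp (x ^ 2 / 4))
      (μ := fun _ => gaussianReal 0 1) fun _ => integrable_exp_sq_div_four_gaussianReal).const_mul _
  have hcont : Continuous fun z : Fin D → ℝ => Real.exp (b * euclNorm z ^ r) := by
    have := continuous_euclNorm (D := D)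
    fun_prop (disch := exact fun _ => Or.inr hr0)
  refine hdom.mono hcont.aestronglyMeasurable (ae_of_all _ fun z => ?_)
  rw [Real.norm_of_nonneg (by positivity), Real.norm_of_nonneg (by positivity), ← Real.exp_sum,
    ← Real.exp_add, Real.exp_le_exp, ← Finset.sum_div, ← euclNorm_sq]
  linarith [hC _ (euclNorm_nonneg z)]

namespace MeasureTheory

variable {Ω α E ι : Type*} [MeasurableSpace Ω] [MeasurableSpace α] {μ : Measure Ω}
  {ν : Measure α} [NormedAddCommGroup E]

lemma TendstoInMeasure.add {l : Filter ι} {f g : ι → Ω → E} {f₀ g₀ : Ω → E}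
    (hf : TendstoInMeasure μ f l f₀) (hg : TendstoInMeasure μ g l g₀) :
    TendstoInMeasure μ (fun i => f i + g i) l (f₀ + g₀) := by
  rw [tendstoInMeasure_iff_norm] at hf hg ⊢
  intro ε hε
  have hsplit : ∀ i, {ω | ε ≤ ‖(f i + g i) ω - (f₀ + g₀) ω‖} ⊆
      {ω | ε / 2 ≤ ‖f i ω - f₀ ω‖} ∪ {ω | ε / 2 ≤ ‖g i ω - g₀ ω‖} := by
    intro i ω (hω : ε ≤ ‖(f i + g i) ω - (f₀ + g₀) ω‖)
    rw [Pi.add_apply, Pi.add_apply, add_sub_add_comm] at hω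
    by_contra h
    rw [Set.mem_union, not_or] at h
    have hf' : ‖f i ω - f₀ ω‖ < ε / 2 := not_le.1 h.1
    have hg' : ‖g i ω - g₀ ω‖ < ε / 2 := not_le.1 h.2
    linarith [norm_add_le (f i ω - f₀ ω) (g i ω - g₀ ω)]
  refine tendsto_of_tendsto_of_tendsto_of_le_of_le tendsto_const_nhds
    (by simpa using (hf _ (half_pos hε)).add (hg _ (half_pos hε))) (fun _ => zero_le)
    fun i => (measure_mono (hsplit i)).trans (measure_union_le _ _)

lemma TendstoInMeasure.tendsto_measure_lt_norm_sub {l : Filter ι} {f : ι → Ω → E}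
    {g : Ω → E} (h : TendstoInMeasure μ f l g) {δ : ℝ} (hδ : 0 < δ) :
    Tendsto (fun i => μ {ω | δ < ‖f i ω - g ω‖}) l (𝓝 0) :=
  tendsto_of_tendsto_of_tendsto_of_le_of_le tendsto_const_nhds
    (tendstoInMeasure_iff_norm.1 h δ hδ) (fun _ => zero_le)
    fun _ => measure_mono fun _ (hω : δ < _) => hω.le

variable [NormedSpace ℝ E] {Z : ℕ → Ω → α}

lemma eLpNorm_average_comp_le (hZ : ∀ c, AEMeasurable (Z c) μ)
    (hlaw : ∀ c, μ.map (Z c) = ν) {g : α → E} (hg : AEStronglyMeasurable g ν) {p : ℝ≥0∞}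
    (hp : 1 ≤ p) (n : ℕ) :
    eLpNorm (fun ω => (n : ℝ)⁻¹ • ∑ c ∈ Finset.range n, g (Z c ω)) p μ ≤ eLpNorm g p ν := by
  have hcomp : ∀ c, eLpNorm (g ∘ Z c) p μ = eLpNorm g p ν := fun c => by
    rw [← eLpNorm_map_measure (by rwa [hlaw c]) (hZ c), hlaw c]
  have hmeas : ∀ c, AEStronglyMeasurable (g ∘ Z c) μ := fun c =>
    (by rwa [hlaw c] : AEStronglyMeasurable g (μ.map (Z c))).comp_aemeasurable (hZ c)
  calc eLpNorm (fun ω => (n : ℝ)⁻¹ • ∑ c ∈ Finset.range n, g (Z c ω)) p μ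
      = ‖(n : ℝ)⁻¹‖ₑ * eLpNorm (∑ c ∈ Finset.range n, g ∘ Z c) p μ := by
        rw [← eLpNorm_const_smul]
        congr 1 with ω
        simp
    _ ≤ ‖(n : ℝ)⁻¹‖ₑ * ∑ c ∈ Finset.range n, eLpNorm (g ∘ Z c) p μ := by
        gcongr
        exact eLpNorm_sum_le (fun c _ => hmeas c) hp
    _ = ‖(n : ℝ)⁻¹‖ₑ * n * eLpNorm g p ν := by
        simp [hcomp, mul_assoc]
    _ ≤ eLpNorm g p ν := by
        rcases n.eq_zero_or_pos with rfl | hn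
        · simp
        · rw [enorm_inv (by positivity), Real.enorm_natCast,
            ENNReal.inv_mul_cancel (by simpa using hn.ne') (by simp), one_mul]

lemma aestronglyMeasurable_average_comp (hZ : ∀ c, AEMeasurable (Z c) μ)
    (hlaw : ∀ c, μ.map (Z c) = ν) {g : α → E} (hg : AEStronglyMeasurable g ν) (n : ℕ) :
    AEStronglyMeasurable (fun ω => (n : ℝ)⁻¹ • ∑ c ∈ Finset.range n, g (Z c ω)) μ :=
  (Finset.aestronglyMeasurable_fun_sum _ fun c _ =>
    ((hlaw c ▸ hg).comp_aemeasurable (hZ c))).const_smul _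

lemma tendstoInMeasure_zero_average_comp_of_tendsto_eLpNorm
    (hZ : ∀ c, AEMeasurable (Z c) μ) (hlaw : ∀ c, μ.map (Z c) = ν) {g : ℕ → α → E}
    (hg : ∀ n, AEStronglyMeasurable (g n) ν)
    (hconv : Tendsto (fun n => eLpNorm (g n) 1 ν) atTop (𝓝 0)) :
    TendstoInMeasure μ (fun (n : ℕ) ω => (n : ℝ)⁻¹ • ∑ c ∈ Finset.range n, g n (Z c ω))
      atTop 0 := by
  refine tendstoInMeasure_of_tendsto_eLpNorm one_ne_zero
    (fun n => aestronglyMeasurable_average_comp hZ hlaw (hg n) n) aestronglyMeasurable_const ?_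
  refine tendsto_of_tendsto_of_tendsto_of_le_of_le tendsto_const_nhds hconv (fun _ => zero_le)
    fun n => ?_
  simpa using eLpNorm_average_comp_le hZ hlaw (hg n) le_rfl n

variable [CompleteSpace E]

theorem tendstoInMeasure_average_comp [IsFiniteMeasure μ] (hZ : ∀ c, Measurable (Z c))
    (hindep : iIndepFun Z μ) (hlaw : ∀ c, μ.map (Z c) = ν) {g : α → E}
    (hg : StronglyMeasurable g) (hint : Integrable g ν) :
    TendstoInMeasure μ (fun (n : ℕ) ω => (n : ℝ)⁻¹ • ∑ c ∈ Finset.range n, g (Z c ω)) atTop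
      (fun _ => ∫ x, g x ∂ν) := by
  borelize E
  have hident : ∀ c, IdentDistrib (g ∘ Z c) (g ∘ Z 0) μ μ := fun c =>
    IdentDistrib.comp ⟨(hZ c).aemeasurable, (hZ 0).aemeasurable, by rw [hlaw, hlaw]⟩
      hg.measurable
  have hint0 : Integrable (g ∘ Z 0) μ := by
    rwa [← integrable_map_measure (by rw [hlaw]; exact hint.1) (hZ 0).aemeasurable, hlaw]
  have hmean : ∫ ω, (g ∘ Z 0) ω ∂μ = ∫ x, g x ∂ν := by
    rw [← hlaw 0, integral_map (hZ 0).aemeasurable (by rw [hlaw]; exact hint.1),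
      Function.comp_def]
  have hslln := strong_law_ae (fun c => g ∘ Z c) hint0
    (fun i j hij => (hindep.indepFun hij).comp hg.measurable hg.measurable) hident
  rw [hmean] at hslln
  exact tendstoInMeasure_of_tendsto_ae
    (aestronglyMeasurable_average_comp (fun c => (hZ c).aemeasurable) hlaw hint.1) hslln

theorem tendstoInMeasure_average_comp_of_tendsto_eLpNorm_sub [IsFiniteMeasure μ]
    (hZ : ∀ c, Measurable (Z c)) (hindep : iIndepFun Z μ) (hlaw : ∀ c, μ.map (Z c) = ν)
    {g : ℕ → α → E} {g₀ : α → E} (hg : ∀ n, AEStronglyMeasurable (g n) ν)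
    (hg₀ : StronglyMeasurable g₀) (hint : Integrable g₀ ν)
    (hconv : Tendsto (fun n => eLpNorm (g n - g₀) 1 ν) atTop (𝓝 0)) :
    TendstoInMeasure μ (fun (n : ℕ) ω => (n : ℝ)⁻¹ • ∑ c ∈ Finset.range n, g n (Z c ω)) atTop
      (fun _ => ∫ x, g₀ x ∂ν) := by
  have hdiff := tendstoInMeasure_zero_average_comp_of_tendsto_eLpNorm
    (fun c => (hZ c).aemeasurable) hlaw (fun n => (hg n).sub hint.1) hconv
  convert hdiff.add (tendstoInMeasure_average_comp hZ hindep hlaw hg₀ hint) using 1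
  · ext n ω
    simp [← smul_add]
  · simp

end MeasureTheory

section GrowthBound

variable {D : ℕ} {E : Type*} [NormedAddCommGroup E] {G : (Fin D → ℝ) → E} {A B r : ℝ}

lemma integrable_comp_mulVec_of_growth (hGcont : Continuous G) (hA : 0 ≤ A) (hB : 0 ≤ B)
    (hr0 : 0 ≤ r) (hr2 : r < 2) (hG : ∀ z, ‖G z‖ ≤ A * Real.exp (B * euclNorm z ^ r))
    (S : Matrix (Fin D) (Fin D) ℝ) :
    Integrable (fun z => G (S *ᵥ z)) (stdGaussian D) :=
  ((integrable_exp_mul_euclNorm_rpow (by positivity) hr0 hr2).const_mul A).mono'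
    (by fun_prop : Continuous fun z => G (S *ᵥ z)).aestronglyMeasurable
    (ae_of_all _ (norm_comp_mulVec_le_of_growth hA hB hr0 hG le_rfl))

lemma tendsto_eLpNorm_comp_mulVec_sub (hGcont : Continuous G) (hA : 0 ≤ A) (hB : 0 ≤ B)
    (hr0 : 0 ≤ r) (hr2 : r < 2) (hG : ∀ z, ‖G z‖ ≤ A * Real.exp (B * euclNorm z ^ r))
    {S : ℕ → Matrix (Fin D) (Fin D) ℝ} {S₀ : Matrix (Fin D) (Fin D) ℝ}
    (hS : Tendsto S atTop (𝓝 S₀)) :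
    Tendsto (fun n => eLpNorm ((fun z => G (S n *ᵥ z)) - fun z => G (S₀ *ᵥ z)) 1
      (stdGaussian D)) atTop (𝓝 0) := by
  obtain ⟨K, hK⟩ := hS.norm.bddAbove_range
  have hK0 : 0 ≤ K := (norm_nonneg _).trans (hK ⟨0, rfl⟩)
  have hdom := tendsto_lintegral_norm_of_dominated_convergence
    (F := fun n z => G (S n *ᵥ z)) (f := fun z => G (S₀ *ᵥ z))
    (fun n => (by fun_prop : Continuous fun z => G (S n *ᵥ z)).aestronglyMeasurable)
    ((integrable_exp_mul_euclNorm_rpow (b := B * K ^ r) (by positivity) hr0 hr2).const_mul A).2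
    (fun n => ae_of_all _ (norm_comp_mulVec_le_of_growth hA hB hr0 hG (hK ⟨n, rfl⟩)))
    (ae_of_all _ fun z => (hGcont.tendsto _).comp
      (((continuous_id.matrix_mulVec continuous_const).tendsto S₀).comp hS))
  simpa [eLpNorm_one_eq_lintegral_enorm, ofReal_norm] using hdom

end GrowthBound

/-- Law of large numbers along a convergent sequence of PSD matrices:
`(1/n) ∑_{c<n} G(√(Q_n) Z_c) → E[G(√Q Z)]` in probability. -/
theorem lln_along_convergent_psd {D D' : ℕ}
    (G : (Fin D → ℝ) → Matrix (Fin D') (Fin D') ℝ) (hGcont : Continuous G)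
    (A B r : ℝ) (hA : 0 < A) (hB : 0 < B) (hr0 : 0 ≤ r) (hr2 : r < 2)
    (hG : ∀ z, frobNorm (G z) ≤ A * Real.exp (B * euclNorm z ^ r))
    (Qn : ℕ → Matrix (Fin D) (Fin D) ℝ) (Q : Matrix (Fin D) (Fin D) ℝ)
    (hQn : ∀ n, (Qn n).PosSemidef) (hQ : Q.PosSemidef)
    (hconv : Tendsto (fun n => frobNorm (Qn n - Q)) atTop (nhds 0))
    {Ω : Type*} [MeasurableSpace Ω] (μ : Measure Ω) [IsProbabilityMeasure μ]
    (Z : ℕ → Ω → (Fin D → ℝ)) (hZmeas : ∀ c, Measurable (Z c))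
    (hZindep : iIndepFun Z μ)
    (hZlaw : ∀ c, Measure.map (Z c) μ = stdGaussian D) :
    ∀ δ > 0,
      Tendsto
        (fun (n : ℕ) =>
          μ {ω |
            δ <
              frobNorm
                ((n : ℝ)⁻¹ •
                    ∑ c ∈ Finset.range n, G ((hQn n).sqrt.mulVec (Z c ω)) -
                  Matrix.of fun i j =>
                    ∫ z, G (hQ.sqrt.mulVec z) i j ∂(stdGaussian D))})
        atTop (nhds 0) := by
  intro δ hδ
  have hG' : ∀ z, ‖G z‖ ≤ A * Real.exp (B * euclNorm z ^ r) := fun z =>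
    frobNorm_eq_norm (G z) ▸ hG z
  have hsqrt : Tendsto (fun n => (hQn n).sqrt) atTop (𝓝 hQ.sqrt) :=
    Matrix.tendsto_posSemidef_sqrt hQn hQ
      (tendsto_iff_norm_sub_tendsto_zero.2 (by simpa only [frobNorm_eq_norm] using hconv))
  have hint := integrable_comp_mulVec_of_growth hGcont hA.le hB.le hr0 hr2 hG'
  have hlln := tendstoInMeasure_average_comp_of_tendsto_eLpNorm_sub hZmeas hZindep hZlaw
    (fun n => (hint (hQn n).sqrt).1) (by fun_prop : Continuous _).stronglyMeasurable
    (hint hQ.sqrt)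
    (tendsto_eLpNorm_comp_mulVec_sub hGcont hA.le hB.le hr0 hr2 hG' hsqrt)
  have hmean : (Matrix.of fun i j => ∫ z, G (hQ.sqrt *ᵥ z) i j ∂(stdGaussian D)) =
      ∫ z, G (hQ.sqrt *ᵥ z) ∂(stdGaussian D) := by
    ext i j
    exact (Matrix.entryLinearMap ℝ ℝ i j).toContinuousLinearMap.integral_comp_comm
      (hint hQ.sqrt)
  simpa only [frobNorm_eq_norm, hmean] using hlln.tendsto_measure_lt_norm_sub hδ
end

section
/- Let (X_n, Y_n) be random variables in Polish spaces 𝕏, 𝕐, with ν_n(dy|x) a version of the conditional law of Y_n given X_n = x. Assume (1) X_n → x₀ in probability for a constant x₀; (2) there exists y₀ ∈ 𝕐 such that for every sequence x_n → x₀ in 𝕏, the measures ν_n(·|x_n) converge weakly to the Dirac mass δ_{y₀}. Then Y_n → y₀ in probability. -/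
/-!
The conditional probability `κₙ(x, {y | δ < dist y y₀})` that `Yₙ` lands far from `y₀` tends to
`0` along every sequence `xₙ → x₀` (portmanteau), hence — by a diagonal argument — uniformly for
large `n` and `x` near `x₀`. Integrating it against the law of `Xₙ`, which concentrates near `x₀`,
gives exactly `μ(δ < dist (Yₙ ω) y₀)`.
-/

open MeasureTheory ProbabilityTheory Filter Topology BoundedContinuousFunction

theorem tendsto_extend_const_of_strictMono {α : Type*} [TopologicalSpace α] {u : ℕ → ℕ}
    (hu : StrictMono u) {t : ℕ → α} {a : α} (ht : Tendsto t atTop (𝓝 a)) :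
    Tendsto (Function.extend u t fun _ => a) atTop (𝓝 a) := by
  intro s hs
  obtain ⟨K, hK⟩ := eventually_atTop.1 (ht hs)
  refine eventually_atTop.2 ⟨u K, fun n hn => ?_⟩
  by_cases hrange : ∃ k, u k = n
  · obtain ⟨k, rfl⟩ := hrange
    rw [hu.injective.extend_apply]
    exact hK k (hu.le_iff_le.1 hn)
  · rw [Function.extend_apply' _ _ _ hrange]
    exact mem_of_mem_nhds hs

theorem tendsto_uncurry_atTop_prod_nhds_of_forall_seq {α β : Type*} [TopologicalSpace α]
    [FirstCountableTopology α] {g : ℕ → α → β} {a : α} {l : Filter β}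
    (h : ∀ x : ℕ → α, Tendsto x atTop (𝓝 a) → Tendsto (fun n => g n (x n)) atTop l) :
    Tendsto (Function.uncurry g) (atTop ×ˢ 𝓝 a) l := by
  -- A subsequence of `p` with strictly increasing first coordinates, padded with `a`, is a
  -- sequence `x → a` to which `h` applies.
  refine tendsto_of_subseq_tendsto fun p hp => ?_
  obtain ⟨ms, hms, hmono⟩ := strictMono_subseq_of_tendsto_atTop (tendsto_fst.comp hp)
  have ht : Tendsto (fun k => (p (ms k)).2) atTop (𝓝 a) :=
    (tendsto_snd.comp hp).comp hms.tendsto_atTop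
  refine ⟨ms, ?_⟩
  have hsub := (h _ (tendsto_extend_const_of_strictMono hmono ht)).comp hmono.tendsto_atTop
  exact hsub.congr fun k => congrArg (g _) (hmono.injective.extend_apply _ _ k)

theorem tendsto_measure_compl_of_forall_integral_tendsto {Ω ι : Type*} [MeasurableSpace Ω]
    [TopologicalSpace Ω] [OpensMeasurableSpace Ω] [HasOuterApproxClosed Ω] {L : Filter ι}
    {ν : ι → Measure Ω} [∀ i, IsProbabilityMeasure (ν i)] {a : Ω}
    (h : ∀ f : Ω →ᵇ ℝ, Tendsto (fun i => ∫ x, f x ∂ν i) L (𝓝 (f a))) {s : Set Ω}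
    (hs : s ∈ 𝓝 a) : Tendsto (fun i => ν i sᶜ) L (𝓝 0) := by
  have hlim : Tendsto (β := ProbabilityMeasure Ω) (fun i => ⟨ν i, inferInstance⟩) L
      (𝓝 ⟨Measure.dirac a, inferInstance⟩) :=
    ProbabilityMeasure.tendsto_iff_forall_integral_tendsto.2 fun f => by
      simpa [integral_dirac' _ _ f.continuous.stronglyMeasurable] using h f
  have hclosed : IsClosed (interior s)ᶜ := isOpen_interior.isClosed_compl
  have hdirac : Measure.dirac a (interior s)ᶜ = 0 := by
    simp [Measure.dirac_apply' _ hclosed.measurableSet, mem_interior_iff_mem_nhds.2 hs]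
  have hinterior : Tendsto (fun i => ν i (interior s)ᶜ) L (𝓝 0) :=
    tendsto_of_le_liminf_of_limsup_le bot_le
      ((ProbabilityMeasure.limsup_measure_closed_le_of_tendsto hlim hclosed).trans hdirac.le)
  exact tendsto_of_tendsto_of_tendsto_of_le_of_le tendsto_const_nhds hinterior
    (fun _ => zero_le) fun _ => measure_mono (Set.compl_subset_compl.2 interior_subset)

theorem measure_preimage_eq_lintegral_of_map_eq_compProd {Ω α β : Type*} [MeasurableSpace Ω]
    [MeasurableSpace α] [MeasurableSpace β] {μ : Measure Ω} [SFinite μ] {X : Ω → α} {Y : Ω → β}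
    {κ : Kernel α β} [IsSFiniteKernel κ] (hX : Measurable X) (hY : Measurable Y)
    (h : μ.map (fun ω => (X ω, Y ω)) = (μ.map X).compProd κ) {s : Set β}
    (hs : MeasurableSet s) : μ (Y ⁻¹' s) = ∫⁻ ω, κ (X ω) s ∂μ :=
  calc μ (Y ⁻¹' s) = μ.map (fun ω => (X ω, Y ω)) (Set.univ ×ˢ s) := by
        rw [Measure.map_apply (hX.prodMk hY) (MeasurableSet.univ.prod hs), Set.mk_preimage_prod,
          Set.preimage_univ, Set.univ_inter]
    _ = ∫⁻ x, κ x s ∂μ.map X := by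
        rw [h, Measure.compProd_apply_prod .univ hs, setLIntegral_univ]
    _ = ∫⁻ ω, κ (X ω) s ∂μ := lintegral_map (κ.measurable_coe hs) hX

theorem tendsto_lintegral_comp_of_tendsto_measure_dist_gt {Ω α : Type*} [MeasurableSpace Ω]
    [PseudoMetricSpace α] [MeasurableSpace α] [OpensMeasurableSpace α] {μ : Measure Ω}
    [IsProbabilityMeasure μ] {X : ℕ → Ω → α} (hX : ∀ n, Measurable (X n)) {a : α}
    (hXa : ∀ η > 0, Tendsto (fun n => μ {ω | η < dist (X n ω) a}) atTop (𝓝 0))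
    {g : ℕ → α → ENNReal} (hg_le : ∀ n x, g n x ≤ 1)
    (hg : Tendsto (Function.uncurry g) (atTop ×ˢ 𝓝 a) (𝓝 0)) :
    Tendsto (fun n => ∫⁻ ω, g n (X n ω) ∂μ) atTop (𝓝 0) := by
  refine ENNReal.tendsto_nhds_zero.2 fun ε hε => ?_
  have hε2 : 0 < ε / 2 := ENNReal.half_pos hε.ne'
  obtain ⟨N, η, hη, hsmall⟩ : ∃ N, ∃ η > 0, ∀ n ≥ N, ∀ x, dist x a < η → g n x ≤ ε / 2 := by
    obtain ⟨P, hP, Q, hQ, hPQ⟩ := eventually_prod_iff.1 (ENNReal.tendsto_nhds_zero.1 hg _ hε2)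
    obtain ⟨N, hN⟩ := eventually_atTop.1 hP
    obtain ⟨η, hη, hηQ⟩ := Metric.eventually_nhds_iff.1 hQ
    exact ⟨N, η, hη, fun n hn x hx => hPQ (hN n hn) (hηQ hx)⟩
  filter_upwards [eventually_ge_atTop N,
    ENNReal.tendsto_nhds_zero.1 (hXa (η / 2) (half_pos hη)) _ hε2] with n hn hfar
  set S := {ω | η / 2 < dist (X n ω) a}
  have hS : MeasurableSet S :=
    hX n (isOpen_lt continuous_const (continuous_id.dist continuous_const)).measurableSet
  have hsplit : ∀ ω, g n (X n ω) ≤ ε / 2 + S.indicator 1 ω := by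
    intro ω
    by_cases hω : ω ∈ S
    · rw [Set.indicator_of_mem hω, Pi.one_apply]
      exact (hg_le _ _).trans le_add_self
    · rw [Set.indicator_of_notMem hω, add_zero]
      exact hsmall n hn _ ((not_lt.1 hω).trans_lt (half_lt_self hη))
  calc ∫⁻ ω, g n (X n ω) ∂μ ≤ ∫⁻ ω, ε / 2 + S.indicator 1 ω ∂μ := lintegral_mono hsplit
    _ = ε / 2 + μ S := by
      rw [lintegral_add_left measurable_const, lintegral_const, measure_univ, mul_one,
        lintegral_indicator_one hS]
    _ ≤ ε / 2 + ε / 2 := add_le_add_right hfar _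
    _ = ε := ENNReal.add_halves ε

theorem bridge_convergence_in_probability_general
    {𝕏 𝕐 : Type*} [MetricSpace 𝕏] [MeasurableSpace 𝕏]
    [BorelSpace 𝕏] [MetricSpace 𝕐] [MeasurableSpace 𝕐]
    [BorelSpace 𝕐]
    {Ω : Type*} [MeasurableSpace Ω] (μ : Measure Ω) [IsProbabilityMeasure μ]
    (X : ℕ → Ω → 𝕏) (Y : ℕ → Ω → 𝕐)
    (hX : ∀ n, Measurable (X n)) (hY : ∀ n, Measurable (Y n))
    (κ : ℕ → ProbabilityTheory.Kernel 𝕏 𝕐) (hκ : ∀ n, IsMarkovKernel (κ n))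
    -- `κ n` is a version of the conditional law of `Y n` given `X n`:
    (hcond : ∀ n,
      Measure.map (fun ω => (X n ω, Y n ω)) μ =
        (Measure.map (X n) μ).compProd (κ n))
    (x₀ : 𝕏) (y₀ : 𝕐)
    -- (1) `X n → x₀` in probability:
    (hXconv : ∀ δ > 0,
      Tendsto (fun n => μ {ω | δ < dist (X n ω) x₀}) atTop (nhds 0))
    -- (2) weak convergence of `ν_n(·|x_n)` to `δ_{y₀}` along every `x_n → x₀`:
    (hweak : ∀ x : ℕ → 𝕏, Tendsto x atTop (nhds x₀) →
      ∀ f : BoundedContinuousFunction 𝕐 ℝ,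
        Tendsto (fun n => ∫ y, f y ∂(κ n (x n))) atTop (nhds (f y₀))) :
    ∀ δ > 0, Tendsto (fun n => μ {ω | δ < dist (Y n ω) y₀}) atTop (nhds 0) := by
  intro δ hδ
  set far : Set 𝕐 := {y | δ < dist y y₀}
  have hfar : far = (Metric.closedBall y₀ δ)ᶜ := by ext; simp [far]
  have hlaw : ∀ n, μ {ω | δ < dist (Y n ω) y₀} = ∫⁻ ω, κ n (X n ω) far ∂μ := fun n =>
    measure_preimage_eq_lintegral_of_map_eq_compProd (hX n) (hY n) (hcond n)
      (isOpen_lt continuous_const (continuous_id.dist continuous_const)).measurableSet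
  have hlocal : Tendsto (Function.uncurry fun n x => κ n x far) (atTop ×ˢ 𝓝 x₀) (𝓝 0) :=
    tendsto_uncurry_atTop_prod_nhds_of_forall_seq fun x hx => by
      simpa only [hfar] using tendsto_measure_compl_of_forall_integral_tendsto (hweak x hx)
        (Metric.closedBall_mem_nhds y₀ hδ)
  simp only [hlaw]
  exact tendsto_lintegral_comp_of_tendsto_measure_dist_gt hX hXconv (fun _ _ => prob_le_one)
    hlocal

/-- Bridge lemma: if `X_n → x₀` in probability, and the conditional laws
`ν_n(·|x_n)` converge weakly to `δ_{y₀}` along every sequence `x_n → x₀`, then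
`Y_n → y₀` in probability. -/
theorem bridge_convergence_in_probability
    {𝕏 𝕐 : Type*} [MetricSpace 𝕏] [PolishSpace 𝕏] [MeasurableSpace 𝕏]
    [BorelSpace 𝕏] [MetricSpace 𝕐] [PolishSpace 𝕐] [MeasurableSpace 𝕐]
    [BorelSpace 𝕐]
    {Ω : Type*} [MeasurableSpace Ω] (μ : Measure Ω) [IsProbabilityMeasure μ]
    (X : ℕ → Ω → 𝕏) (Y : ℕ → Ω → 𝕐)
    (hX : ∀ n, Measurable (X n)) (hY : ∀ n, Measurable (Y n))
    (κ : ℕ → ProbabilityTheory.Kernel 𝕏 𝕐) (hκ : ∀ n, IsMarkovKernel (κ n))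
    -- `κ n` is a version of the conditional law of `Y n` given `X n`:
    (hcond : ∀ n,
      Measure.map (fun ω => (X n ω, Y n ω)) μ =
        (Measure.map (X n) μ).compProd (κ n))
    (x₀ : 𝕏) (y₀ : 𝕐)
    -- (1) `X n → x₀` in probability:
    (hXconv : ∀ δ > 0,
      Tendsto (fun n => μ {ω | δ < dist (X n ω) x₀}) atTop (nhds 0))
    -- (2) weak convergence of `ν_n(·|x_n)` to `δ_{y₀}` along every `x_n → x₀`:
    (hweak : ∀ x : ℕ → 𝕏, Tendsto x atTop (nhds x₀) →
      ∀ f : BoundedContinuousFunction 𝕐 ℝ,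
        Tendsto (fun n => ∫ y, f y ∂(κ n (x n))) atTop (nhds (f y₀))) :
    ∀ δ > 0, Tendsto (fun n => μ {ω | δ < dist (Y n ω) y₀}) atTop (nhds 0) :=
  bridge_convergence_in_probability_general μ X Y hX hY κ hκ hcond x₀ y₀ hXconv hweak
end
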